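/- Let f ∈ L^∞(ℝ), let I be a dyadic interval of length L with center c_I, let x ∈ I, and let f₂ = f·χ_{ℝ∖I*}. Then ∑_{k: 2^k ≥ L} sup_{J ∈ 𝓘_k} |M_{J+x} f₂(x) − E_k f₂(x) − (M_{J+c_I} f₂(c_I) − E_k f₂(c_I))| ≤ C‖f‖_∞ for an absolute constant C, where 𝓘_k is the set of intervals of length 2^k containing 0. -/

import Mathlib

open MeasureTheory Set ENNReal

/-- The dyadic interval `[j·2^{k₀}, (j+1)·2^{k₀})`. -/
noncomputable def dyadicI (k₀ j : ℤ) : Set ℝ :=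
  Set.Ico ((j:ℝ) * (2:ℝ) ^ k₀) ((j + 1 : ℝ) * (2:ℝ) ^ k₀)

/-- The center of the dyadic interval `dyadicI k₀ j`. -/
noncomputable def dyadicC (k₀ j : ℤ) : ℝ := (j:ℝ) * (2:ℝ) ^ k₀ + (2:ℝ) ^ k₀ / 2

/-- The concentric triple `I*` of the dyadic interval `dyadicI k₀ j`. -/
noncomputable def dyadicStar (k₀ j : ℤ) : Set ℝ :=
  Set.Icc (dyadicC k₀ j - 3 * (2:ℝ) ^ k₀ / 2) (dyadicC k₀ j + 3 * (2:ℝ) ^ k₀ / 2)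

/-- Dyadic conditional expectation at scale `2^k`. -/
noncomputable def dyadicE (f : ℝ → ℝ) (k : ℤ) (x : ℝ) : ℝ :=
  (2:ℝ) ^ (-k) *
    ∫ y in Set.Ico ((⌊x / (2:ℝ) ^ k⌋ : ℝ) * (2:ℝ) ^ k)
      ((⌊x / (2:ℝ) ^ k⌋ + 1 : ℝ) * (2:ℝ) ^ k), f y

/-- The average of `g` over `J + t`, where `J = [a, a + 2^k)` records an interval of
length `2^k` containing `0` (so `a ∈ [-2^k, 0]`). -/
noncomputable def avgJ (g : ℝ → ℝ) (k : ℤ) (a t : ℝ) : ℝ :=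
  (2:ℝ) ^ (-k) * ∫ y in Set.Ico (t + a) (t + a + (2:ℝ) ^ k), g y

/-!
For `2^k ≥ |I|` the points `x` and `c_I` lie in the same dyadic interval of length `2^k`, so
the two conditional expectations cancel. The two averages are over translates of one interval
by `|x - c_I| ≤ |I|/2`, so they differ by at most `2^{-k} |I| ‖f‖_∞` (only the two pieces of the
symmetric difference contribute). Summing over `2^k ≥ |I|` gives `2 ‖f‖_∞`.
-/

lemma norm_intervalIntegral_sub_translate_le {E : Type*} [NormedAddCommGroup E]
    [NormedSpace ℝ E] {g : ℝ → E} {M : ℝ}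
    (hg : AEStronglyMeasurable g volume) (hgM : ∀ᵐ y, ‖g y‖ ≤ M) (s t h : ℝ) :
    ‖(∫ y in s..s + h, g y) - ∫ y in t..t + h, g y‖ ≤ 2 * M * |s - t| := by
  have hint : ∀ p q : ℝ, IntervalIntegrable g volume p q := fun p q =>
    intervalIntegrable_iff.mpr
      (Measure.integrableOn_of_bounded measure_Ioc_lt_top.ne hg (ae_restrict_of_ae hgM))
  rw [intervalIntegral.integral_interval_sub_interval_comm (hint _ _) (hint _ _) (hint _ _)]
  have h₁ := intervalIntegral.norm_integral_le_of_norm_le_const_ae (a := s) (b := t)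
    (hgM.mono fun y hy _ => hy)
  have h₂ := intervalIntegral.norm_integral_le_of_norm_le_const_ae (a := s + h) (b := t + h)
    (hgM.mono fun y hy _ => hy)
  rw [add_sub_add_right_eq_sub] at h₂
  rw [abs_sub_comm] at h₁ h₂
  linarith [norm_sub_le (∫ y in s..t, g y) (∫ y in s + h..t + h, g y)]

lemma avgJ_eq_intervalIntegral (g : ℝ → ℝ) (k : ℤ) (a t : ℝ) :
    avgJ g k a t = 2 ^ (-k) * ∫ y in t + a..t + a + 2 ^ k, g y := by
  rw [avgJ, intervalIntegral.integral_of_le (le_add_of_nonneg_right (zpow_nonneg zero_le_two k)),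
    integral_Ico_eq_integral_Ioc]

lemma abs_avgJ_sub_avgJ_le {g : ℝ → ℝ} {M : ℝ} (hg : AEStronglyMeasurable g volume)
    (hgM : ∀ᵐ y, ‖g y‖ ≤ M) (k : ℤ) (a s t : ℝ) :
    |avgJ g k a s - avgJ g k a t| ≤ 2 ^ (-k) * (2 * M * |s - t|) := by
  have h := norm_intervalIntegral_sub_translate_le hg hgM (s + a) (t + a) (2 ^ k)
  rw [add_sub_add_right_eq_sub, Real.norm_eq_abs] at h
  rw [avgJ_eq_intervalIntegral, avgJ_eq_intervalIntegral, ← mul_sub, abs_mul,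
    abs_of_pos (_root_.zpow_pos two_pos _)]
  exact mul_le_mul_of_nonneg_left h (zpow_nonneg zero_le_two _)

section Dyadic

variable {k₀ j : ℤ}

lemma floor_div_zpow_of_mem_dyadicI {t : ℝ} (ht : t ∈ dyadicI k₀ j) {k : ℤ} (hk : k₀ ≤ k) :
    ⌊t / 2 ^ k⌋ = j / 2 ^ (k - k₀).toNat := by
  have hpos : (0 : ℝ) < 2 ^ k₀ := zpow_pos two_pos k₀
  have hj : ⌊t / 2 ^ k₀⌋ = j := by
    rw [Int.floor_eq_iff, le_div_iff₀ hpos, div_lt_iff₀ hpos]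
    exact ht
  have hscale : t / 2 ^ k = t / 2 ^ k₀ / ((2 ^ (k - k₀).toNat : ℕ) : ℝ) := by
    rw [div_div, Nat.cast_pow, Nat.cast_ofNat, ← zpow_natCast, ← zpow_add₀ two_ne_zero,
      Int.toNat_of_nonneg (sub_nonneg.mpr hk), add_sub_cancel]
  rw [hscale, Int.floor_div_natCast, hj, Nat.cast_pow, Nat.cast_ofNat]

lemma dyadicE_eq_of_mem_dyadicI (g : ℝ → ℝ) {s t : ℝ} (hs : s ∈ dyadicI k₀ j)
    (ht : t ∈ dyadicI k₀ j) {k : ℤ} (hk : k₀ ≤ k) : dyadicE g k s = dyadicE g k t := by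
  rw [dyadicE, dyadicE, floor_div_zpow_of_mem_dyadicI hs hk, floor_div_zpow_of_mem_dyadicI ht hk]

lemma dyadicC_mem_dyadicI : dyadicC k₀ j ∈ dyadicI k₀ j := by
  have hpos : (0 : ℝ) < 2 ^ k₀ := zpow_pos two_pos k₀
  constructor <;> rw [dyadicC] <;> linarith

lemma abs_sub_dyadicC_le {t : ℝ} (ht : t ∈ dyadicI k₀ j) : |t - dyadicC k₀ j| ≤ 2 ^ k₀ / 2 := by
  obtain ⟨h₁, h₂⟩ := ht
  rw [abs_le, dyadicC]
  constructor <;> linarith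

lemma abs_avgJ_sub_dyadicE_sub_le {g : ℝ → ℝ} {M : ℝ} (hg : AEStronglyMeasurable g volume)
    (hgM : ∀ᵐ y, ‖g y‖ ≤ M) {x : ℝ} (hx : x ∈ dyadicI k₀ j) {k : ℤ} (hk : k₀ ≤ k) (a : ℝ) :
    |avgJ g k a x - dyadicE g k x - (avgJ g k a (dyadicC k₀ j) - dyadicE g k (dyadicC k₀ j))|
      ≤ 2 ^ (k₀ - k) * M := by
  have hM : 0 ≤ M := by
    obtain ⟨y, hy⟩ := hgM.exists
    exact (norm_nonneg _).trans hy
  rw [dyadicE_eq_of_mem_dyadicI g hx dyadicC_mem_dyadicI hk, sub_sub_sub_cancel_right]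
  calc _ ≤ 2 ^ (-k) * (2 * M * |x - dyadicC k₀ j|) := abs_avgJ_sub_avgJ_le hg hgM k a _ _
    _ ≤ 2 ^ (-k) * (2 * M * (2 ^ k₀ / 2)) := by
        gcongr
        exact abs_sub_dyadicC_le hx
    _ = 2 ^ (k₀ - k) * M := by
        rw [sub_eq_neg_add, zpow_add₀ two_ne_zero]
        ring

end Dyadic

lemma tsum_ite_ofReal_two_zpow_sub_eq_two (k₀ : ℤ) :
    ∑' k : ℤ, (if k₀ ≤ k then ENNReal.ofReal (2 ^ (k₀ - k)) else 0) = 2 := by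
  have hinj : Function.Injective fun n : ℕ => k₀ + n := fun m n h => by simpa using h
  rw [← hinj.tsum_eq]
  · calc ∑' n : ℕ, (if k₀ ≤ k₀ + n then ENNReal.ofReal (2 ^ (k₀ - (k₀ + n))) else 0)
          = ∑' n : ℕ, 2⁻¹ ^ n := by
            refine tsum_congr fun n => ?_
            rw [if_pos (by omega), sub_add_cancel_left, zpow_neg, zpow_natCast, ← inv_pow,
              ENNReal.ofReal_pow (by norm_num), ENNReal.ofReal_inv_of_pos two_pos,
              ENNReal.ofReal_ofNat]
      _ = 2 := by rw [ENNReal.tsum_geometric, ENNReal.one_sub_inv_two, inv_inv]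
  · intro k hk
    have h : k₀ ≤ k := by
      by_contra h
      exact hk (if_neg h)
    exact ⟨(k - k₀).toNat, by simp only; omega⟩

/-- for `f ∈ L^∞`, `I` dyadic of length `L = 2^{k₀}` with center `c_I`,
`x ∈ I`, and `f₂ = f·χ_{ℝ∖I*}`, one has
`∑_{k : 2^k ≥ L} sup_{J ∈ 𝓘_k} |M_{J+x} f₂(x) − E_k f₂(x) − (M_{J+c_I} f₂(c_I) − E_k f₂(c_I))|
  ≤ C‖f‖_∞` for an absolute constant `C > 0`. -/
theorem stmt16 :
    ∃ C : ℝ, 0 < C ∧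
      ∀ (f : ℝ → ℝ), MemLp f ⊤ (volume : Measure ℝ) →
        ∀ (k₀ j : ℤ) (x : ℝ), x ∈ dyadicI k₀ j →
          (∑' k : ℤ,
              if (2:ℝ) ^ k₀ ≤ (2:ℝ) ^ k then
                ⨆ a ∈ Set.Icc (-(2:ℝ) ^ k) 0,
                  ENNReal.ofReal
                    |avgJ ((dyadicStar k₀ j)ᶜ.indicator f) k a x -
                        dyadicE ((dyadicStar k₀ j)ᶜ.indicator f) k x -
                        (avgJ ((dyadicStar k₀ j)ᶜ.indicator f) k a (dyadicC k₀ j) -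
                          dyadicE ((dyadicStar k₀ j)ᶜ.indicator f) k (dyadicC k₀ j))|
              else 0) ≤
            ENNReal.ofReal (C * (eLpNorm f ⊤ (volume : Measure ℝ)).toReal) := by
  refine ⟨2, two_pos, fun f hf k₀ j x hx => ?_⟩
  have hg : AEStronglyMeasurable ((dyadicStar k₀ j)ᶜ.indicator f) volume :=
    hf.1.indicator measurableSet_Icc.compl
  have hgM : ∀ᵐ y, ‖(dyadicStar k₀ j)ᶜ.indicator f y‖ ≤ (eLpNorm f ⊤ volume).toReal := by
    rw [toReal_eLpNorm hf.1]
    filter_upwards [ae_le_lpNorm_exponent_top hf] with y hy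
    exact (norm_indicator_le_norm_self f y).trans hy
  calc _ ≤ ∑' k : ℤ, (if k₀ ≤ k then ENNReal.ofReal (2 ^ (k₀ - k)) else 0) *
          ENNReal.ofReal (eLpNorm f ⊤ volume).toReal := by
        refine ENNReal.tsum_le_tsum fun k => ?_
        simp only [zpow_le_zpow_iff_right₀ (one_lt_two : (1 : ℝ) < 2)]
        split_ifs with hk
        · rw [← ENNReal.ofReal_mul (zpow_nonneg zero_le_two _)]
          exact iSup₂_le fun a _ =>
            ENNReal.ofReal_le_ofReal (abs_avgJ_sub_dyadicE_sub_le hg hgM hx hk a)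
        · rw [zero_mul]
    _ = _ := by
        rw [ENNReal.tsum_mul_right, tsum_ite_ofReal_two_zpow_sub_eq_two, ENNReal.ofReal_mul zero_le_two,
          ENNReal.ofReal_ofNat]
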